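/- arXiv:1711.01020 — 2 statements merged into one kernel-verified Lean document; each statement's English description precedes it below -/
import Mathlib

section
/- If E ⊂ ℝⁿ is a bounded set of finite perimeter with |E| > 0 and diameter D_E = sup{|x − y| : x, y ∈ E}, then for any unit vector u, ∫_{∂*E} max(u · v_E(y), 0) dH^{n−1}(y) ≥ |E| / D_E, where ∂*E is the reduced boundary and v_E the generalized exterior normal. -/
open Set Metric MeasureTheory
open scoped RealInnerProductSpace

/-- A C¹ "ramp" function: values in `[0,1]`, derivative `1/(2*(r+δ))` on `closedBall c r`. -/
lemma exists_ramp (c r δ : ℝ) (hr : 0 < r) (hδ : 0 < δ) :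
    ∃ φ : ℝ → ℝ, ContDiff ℝ 1 φ ∧ (∀ t, 0 ≤ φ t) ∧ (∀ t, φ t ≤ 1) ∧
      (∀ t ∈ Metric.closedBall c r, HasDerivAt φ (1 / (2 * (r + δ))) t) := by
  have hRpos : 0 < r + δ := by positivity
  set η : ContDiffBump c := ⟨r, r + δ, hr, by linarith⟩ with hη
  set L : ℝ := 2 * (r + δ) with hL
  have hLpos : 0 < L := by positivity
  set b₀ : ℝ := c - (r + δ) with hb₀
  set φ : ℝ → ℝ := fun t => (∫ s in b₀..t, η s) / L with hφ
  have hderiv : ∀ t, HasDerivAt φ (η t / L) t := by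
    intro t
    have h1 : HasDerivAt (fun t => ∫ s in b₀..t, η s) (η t) t :=
      intervalIntegral.integral_hasDerivAt_right (η.continuous.intervalIntegrable _ _)
        (η.continuous.stronglyMeasurableAtFilter _ _) η.continuous.continuousAt
    exact h1.div_const L
  have hzero : ∀ t ≤ b₀, (∫ s in b₀..t, η s) = 0 := by
    intro t ht
    have heqon : EqOn (fun s => η s) (fun _ => (0 : ℝ)) (Set.uIcc t b₀) := by
      intro s hs
      rw [Set.uIcc_of_le ht] at hs
      have hs' : s ≤ b₀ := hs.2
      refine η.zero_of_le_dist ?_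
      rw [Real.dist_eq, abs_sub_comm, abs_of_nonneg (by simp only [hb₀] at hs' ⊢; linarith)]
      simp only [hb₀] at hs' ⊢
      linarith
    rw [intervalIntegral.integral_symm t b₀, intervalIntegral.integral_congr heqon,
      intervalIntegral.integral_zero, neg_zero]
  have htotal : ∀ t, (∫ s in b₀..t, η s) ≤ L := by
    intro t
    rcases le_or_gt t b₀ with ht | ht
    · rw [hzero t ht]; linarith
    · rw [intervalIntegral.integral_of_le ht.le]
      have h1 : (∫ s in Set.Ioc b₀ t, η s) ≤ ∫ s, η s :=
        setIntegral_le_integral η.integrable (Filter.Eventually.of_forall η.nonneg')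
      have h2 : (∫ s, η s) ≤ L := by
        have hind : ∀ x, η x ≤ (Metric.ball c (r + δ)).indicator (fun _ => (1 : ℝ)) x := by
          intro x
          by_cases hx : x ∈ Metric.ball c (r + δ)
          · rw [Set.indicator_of_mem hx]; exact η.le_one
          · rw [Set.indicator_of_notMem hx]
            have : η x = 0 := η.zero_of_le_dist (le_of_not_gt (by simpa [Metric.mem_ball] using hx))
            simp [this]
        have hindint : Integrable ((Metric.ball c (r + δ)).indicator (fun _ => (1 : ℝ))) := by
          rw [integrable_indicator_iff measurableSet_ball]
          exact integrableOn_const measure_ball_lt_top.ne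
        calc (∫ s, η s) ≤ ∫ s, (Metric.ball c (r + δ)).indicator (fun _ => (1 : ℝ)) s :=
              integral_mono η.integrable hindint hind
          _ = (volume (Metric.ball c (r + δ))).toReal • (1 : ℝ) :=
              integral_indicator_const (1 : ℝ) measurableSet_ball
          _ = L := by
              rw [Real.volume_ball, ENNReal.toReal_ofReal (by positivity)]
              simp [hL]
      linarith
  have hnonneg : ∀ t, 0 ≤ ∫ s in b₀..t, η s := by
    intro t
    rcases le_or_gt t b₀ with ht | ht
    · rw [hzero t ht]
    · exact intervalIntegral.integral_nonneg ht.le (fun s _ => η.nonneg)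
  refine ⟨φ, ?_, ?_, ?_, ?_⟩
  · rw [contDiff_one_iff_deriv]
    refine ⟨fun t => (hderiv t).differentiableAt, ?_⟩
    have : deriv φ = fun t => η t / L := funext fun t => (hderiv t).deriv
    rw [this]
    exact η.continuous.div_const L
  · intro t
    exact div_nonneg (hnonneg t) hLpos.le
  · intro t
    rw [div_le_one hLpos]
    exact htotal t
  · intro t ht
    have h1 : η t = 1 := η.one_of_mem_closedBall ht
    have := hderiv t
    rw [h1] at this
    exact this

/-- For a bounded set `E` of finite perimeter with positive volume,
reduced boundary `B = ∂*E` and generalized exterior normal `ν` (characterized by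
the Gauss–Green formula), and any unit vector `u`,
`∫_{∂*E} (u·ν)₊ dH^{n−1} ≥ |E| / D_E`. -/
theorem stmt6 {n : ℕ} (E B : Set (EuclideanSpace ℝ (Fin n)))
    (ν : EuclideanSpace ℝ (Fin n) → EuclideanSpace ℝ (Fin n))
    (hEmeas : MeasurableSet E) (hEbdd : Bornology.IsBounded E)
    (hvol : 0 < volume E)
    (hν : ∀ y ∈ B, ‖ν y‖ = 1)
    (hGaussGreen : ∀ ψ : EuclideanSpace ℝ (Fin n) → ℝ,
      ContDiff ℝ 1 ψ → HasCompactSupport ψ →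
      ∀ w : EuclideanSpace ℝ (Fin n),
        ∫ x in E, fderiv ℝ ψ x w = ∫ y in B, ψ y * ⟪w, ν y⟫ ∂(μH[n - 1]))
    (u : EuclideanSpace ℝ (Fin n)) (hu : ‖u‖ = 1) :
    (volume E).toReal / Metric.diam E
      ≤ ∫ y in B, max ⟪u, ν y⟫ 0 ∂(μH[n - 1]) := by
  classical
  have hInonneg : 0 ≤ ∫ y in B, max ⟪u, ν y⟫ 0 ∂(μH[n - 1]) :=
    integral_nonneg fun y => le_max_right _ _
  rcases eq_or_lt_of_le (Metric.diam_nonneg (s := E)) with hD | hD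
  · rw [← hD, div_zero]; exact hInonneg
  set D : ℝ := Metric.diam E with hDdef
  -- volume facts
  obtain ⟨R₀, hR₀⟩ := hEbdd.subset_closedBall 0
  have hvolfin : volume E < ⊤ :=
    lt_of_le_of_lt (measure_mono hR₀) measure_closedBall_lt_top
  set V : ℝ := (volume E).toReal with hV
  have hVpos : 0 < V := ENNReal.toReal_pos hvol.ne' hvolfin.ne
  obtain ⟨x₀, hx₀⟩ : E.Nonempty := nonempty_of_measure_ne_zero hvol.ne'
  -- the linear functional
  have hgdist : ∀ x ∈ E, ∀ y ∈ E, ⟪u, x⟫ - ⟪u, y⟫ ≤ D := by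
    intro x hx y hy
    calc ⟪u, x⟫ - ⟪u, y⟫ = ⟪u, x - y⟫ := by rw [inner_sub_right]
      _ ≤ ‖u‖ * ‖x - y‖ := real_inner_le_norm u (x - y)
      _ = dist x y := by rw [hu, one_mul, dist_eq_norm]
      _ ≤ D := Metric.dist_le_diam_of_mem hEbdd hx hy
  set gE : Set ℝ := (fun x => ⟪u, x⟫) '' E with hgE
  have hne : gE.Nonempty := ⟨⟪u, x₀⟫, mem_image_of_mem _ hx₀⟩
  have hbddA : BddAbove gE := by
    refine ⟨⟪u, x₀⟫ + D, ?_⟩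
    rintro _ ⟨x, hx, rfl⟩
    linarith [hgdist x hx x₀ hx₀]
  have hbddB : BddBelow gE := by
    refine ⟨⟪u, x₀⟫ - D, ?_⟩
    rintro _ ⟨x, hx, rfl⟩
    linarith [hgdist x₀ hx₀ x hx]
  set m : ℝ := sInf gE with hm
  set M : ℝ := sSup gE with hM
  have hmM : M - m ≤ D := by
    have key : ∀ y ∈ E, M ≤ ⟪u, y⟫ + D := by
      intro y hy
      refine csSup_le hne ?_
      rintro _ ⟨x, hx, rfl⟩
      linarith [hgdist x hx y hy]
    have h1 : M - D ≤ m := by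
      refine le_csInf hne ?_
      rintro _ ⟨y, hy, rfl⟩
      linarith [key y hy]
    linarith
  have hmem : ∀ x ∈ E, m ≤ ⟪u, x⟫ ∧ ⟪u, x⟫ ≤ M := fun x hx =>
    ⟨csInf_le hbddB (mem_image_of_mem _ hx), le_csSup hbddA (mem_image_of_mem _ hx)⟩
  -- main estimate for every ε > 0
  have main : ∀ ε : ℝ, 0 < ε →
      V / (D + ε) ≤ ∫ y in B, max ⟪u, ν y⟫ 0 ∂(μH[n - 1]) := by
    intro ε hε
    obtain ⟨φ, hφ1, hφ0, hφle, hφd⟩ :=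
      exists_ramp ((m + M) / 2) (D / 2) (ε / 2) (by linarith) (by linarith)
    set L : ℝ := 2 * (D / 2 + ε / 2) with hLdef
    have hLeq : L = D + ε := by rw [hLdef]; ring
    have hLpos : 0 < L := by rw [hLeq]; linarith
    -- cutoff bump
    set R : ℝ := max R₀ 0 with hR
    have hER : E ⊆ Metric.closedBall 0 R :=
      hR₀.trans (Metric.closedBall_subset_closedBall (le_max_left _ _))
    set χ : ContDiffBump (0 : EuclideanSpace ℝ (Fin n)) :=
      ⟨R + 1, R + 2, by simp [hR]; positivity, by linarith⟩ with hχ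
    set ψ₀ : EuclideanSpace ℝ (Fin n) → ℝ := fun x => φ ⟪u, x⟫ * χ x with hψ₀
    have hψc1 : ContDiff ℝ 1 ψ₀ := by
      refine ContDiff.mul ?_ (χ.contDiff.of_le (by exact_mod_cast le_top))
      exact hφ1.comp (innerSL ℝ u).contDiff
    have hψsupp : HasCompactSupport ψ₀ := by
      have := χ.hasCompactSupport
      exact HasCompactSupport.mul_left this
    have hψ0 : ∀ x, 0 ≤ ψ₀ x := fun x => mul_nonneg (hφ0 _) χ.nonneg
    have hψ1 : ∀ x, ψ₀ x ≤ 1 := by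
      intro x
      calc φ ⟪u, x⟫ * χ x ≤ 1 * 1 :=
            mul_le_mul (hφle _) χ.le_one χ.nonneg zero_le_one
        _ = 1 := by ring
    -- derivative on E
    have hfd : ∀ x ∈ E, fderiv ℝ ψ₀ x u = 1 / L := by
      intro x hx
      have hxb : x ∈ Metric.ball (0 : EuclideanSpace ℝ (Fin n)) (R + 1) := by
        have := hER hx
        rw [Metric.mem_closedBall] at this
        rw [Metric.mem_ball]
        linarith
      have hev : ψ₀ =ᶠ[nhds x] fun y => φ ⟪u, y⟫ := by
        filter_upwards [isOpen_ball.mem_nhds hxb] with y hy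
        have h1 : χ y = 1 := χ.one_of_mem_closedBall (Metric.ball_subset_closedBall hy)
        simp [hψ₀, h1]
      have hgx : ⟪u, x⟫ ∈ Metric.closedBall ((m + M) / 2) (D / 2) := by
        rw [Metric.mem_closedBall, Real.dist_eq]
        obtain ⟨h1, h2⟩ := hmem x hx
        rw [abs_le]
        constructor <;> linarith
      have hcomp : HasFDerivAt (fun y => φ ⟪u, y⟫)
          ((1 / L) • (innerSL ℝ u : EuclideanSpace ℝ (Fin n) →L[ℝ] ℝ)) x := by
        have h1 : HasDerivAt φ (1 / L) ⟪u, x⟫ := hφd _ hgx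
        have h2 : HasFDerivAt (fun y : EuclideanSpace ℝ (Fin n) => ⟪u, y⟫)
            (innerSL ℝ u : EuclideanSpace ℝ (Fin n) →L[ℝ] ℝ) x :=
          (innerSL ℝ u).hasFDerivAt
        exact h1.comp_hasFDerivAt x h2
      rw [hev.fderiv_eq, hcomp.fderiv]
      have huu : ⟪u, u⟫ = 1 := by
        rw [real_inner_self_eq_norm_mul_norm, hu]; ring
      rw [ContinuousLinearMap.smul_apply, innerSL_apply_apply, huu, smul_eq_mul, mul_one]
    -- integrability of derivative terms over E
    have hfdint : ∀ ψ : EuclideanSpace ℝ (Fin n) → ℝ, ContDiff ℝ 1 ψ → HasCompactSupport ψ →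
        IntegrableOn (fun x => fderiv ℝ ψ x u) E volume := by
      intro ψ hψ hs
      have hc : Continuous fun x => fderiv ℝ ψ x u := by
        have h1 : Continuous (fderiv ℝ ψ) := hψ.continuous_fderiv one_ne_zero
        exact (ContinuousLinearMap.apply ℝ ℝ u).continuous.comp h1
      exact (hc.integrable_of_hasCompactSupport (hs.fderiv_apply ℝ u)).integrableOn
    -- base integral over E
    have hbaseE : ∫ x in E, fderiv ℝ ψ₀ x u = V / L := by
      rw [setIntegral_congr_fun hEmeas (fun x hx => hfd x hx)]
      rw [setIntegral_const, smul_eq_mul]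
      rw [hV, measureReal_def]
      ring
    have hGGψ := hGaussGreen ψ₀ hψc1 hψsupp u
    have hbase' : ∫ y in B, ψ₀ y * ⟪u, ν y⟫ ∂(μH[n - 1]) = V / L := by
      rw [← hGGψ, hbaseE]
    have hVLpos : 0 < V / L := div_pos hVpos hLpos
    have hbaseint : Integrable (fun y => ψ₀ y * ⟪u, ν y⟫) ((μH[n - 1]).restrict B) := by
      by_contra hcon
      rw [integral_undef hcon] at hbase'
      exact hVLpos.ne hbase'
    -- the key fact: Gauss-Green with honest integrability for all test functions
    have key : ∀ θ : EuclideanSpace ℝ (Fin n) → ℝ, ContDiff ℝ 1 θ → HasCompactSupport θ →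
        Integrable (fun y => θ y * ⟪u, ν y⟫) ((μH[n - 1]).restrict B) ∧
        ∫ y in B, θ y * ⟪u, ν y⟫ ∂(μH[n - 1]) = ∫ x in E, fderiv ℝ θ x u := by
      intro θ hθ1 hθs
      have hGGθ := hGaussGreen θ hθ1 hθs u
      by_cases hA : ∫ x in E, fderiv ℝ θ x u = 0
      · -- test with ψ₀ + θ
        have hsum1 : ContDiff ℝ 1 (fun x => ψ₀ x + θ x) := hψc1.add hθ1
        have hsum2 : HasCompactSupport (fun x => ψ₀ x + θ x) := hψsupp.add hθs
        have hGGsum := hGaussGreen _ hsum1 hsum2 u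
        have hEadd : ∫ x in E, fderiv ℝ (fun y => ψ₀ y + θ y) x u
            = (∫ x in E, fderiv ℝ ψ₀ x u) + ∫ x in E, fderiv ℝ θ x u := by
          rw [← integral_add (hfdint ψ₀ hψc1 hψsupp) (hfdint θ hθ1 hθs)]
          refine setIntegral_congr_fun hEmeas (fun x _ => ?_)
          rw [fderiv_fun_add ((hψc1.differentiable one_ne_zero) x) ((hθ1.differentiable one_ne_zero) x)]
          rfl
        have hval : ∫ y in B, (ψ₀ y + θ y) * ⟪u, ν y⟫ ∂(μH[n - 1]) = V / L := by
          rw [← hGGsum, hEadd, hbaseE, hA, add_zero]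
        have hsumint : Integrable (fun y => (ψ₀ y + θ y) * ⟪u, ν y⟫)
            ((μH[n - 1]).restrict B) := by
          by_contra hcon
          rw [integral_undef hcon] at hval
          exact hVLpos.ne hval
        have hθint : Integrable (fun y => θ y * ⟪u, ν y⟫) ((μH[n - 1]).restrict B) := by
          have h1 := hsumint.sub hbaseint
          refine h1.congr (Filter.Eventually.of_forall fun y => ?_)
          simp only [Pi.sub_apply]
          ring
        refine ⟨hθint, ?_⟩
        rw [hA]
        have h3 : ∫ y in B, θ y * ⟪u, ν y⟫ ∂(μH[n - 1])
            = (∫ y in B, (ψ₀ y + θ y) * ⟪u, ν y⟫ ∂(μH[n - 1]))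
              - ∫ y in B, ψ₀ y * ⟪u, ν y⟫ ∂(μH[n - 1]) := by
          rw [← integral_sub hsumint hbaseint]
          refine integral_congr_ae (Filter.Eventually.of_forall fun y => ?_)
          ring
        rw [h3, hval, hbase', sub_self]
      · refine ⟨?_, hGGθ.symm⟩
        by_contra hcon
        rw [hGGθ, integral_undef hcon] at hA
        exact hA rfl
    -- cutoff bumps τ j, equal to 1 on ball 0 (j+1)
    have hτ : ∀ j : ℕ, ∃ τ : EuclideanSpace ℝ (Fin n) → ℝ,
        Integrable (fun y => τ y * ⟪u, ν y⟫) ((μH[n - 1]).restrict B) ∧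
        (∀ y ∈ Metric.closedBall (0 : EuclideanSpace ℝ (Fin n)) ((j : ℝ) + 1), τ y = 1) := by
      intro j
      set τ : ContDiffBump (0 : EuclideanSpace ℝ (Fin n)) :=
        ⟨(j : ℝ) + 1, (j : ℝ) + 2, by positivity, by linarith⟩ with hτdef
      refine ⟨fun y => τ y, ?_, ?_⟩
      · exact (key _ (τ.contDiff.of_le (by exact_mod_cast le_top)) τ.hasCompactSupport).1
      · intro y hy
        exact τ.one_of_mem_closedBall hy
    -- local integrability of y ↦ ⟪u, ν y⟫ w.r.t. restricted Hausdorff measure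
    have hloc : LocallyIntegrable (fun y => ⟪u, ν y⟫) ((μH[n - 1]).restrict B) := by
      intro x
      obtain ⟨j, hj⟩ := exists_nat_gt ‖x‖
      obtain ⟨τ, hτint, hτone⟩ := hτ j
      refine ⟨Metric.ball (0 : EuclideanSpace ℝ (Fin n)) ((j : ℝ) + 1),
        isOpen_ball.mem_nhds (by rw [Metric.mem_ball, dist_zero_right]; linarith), ?_⟩
      have hae : (fun y => τ y * ⟪u, ν y⟫) =ᵐ[((μH[n - 1]).restrict B).restrict
          (Metric.ball (0 : EuclideanSpace ℝ (Fin n)) ((j : ℝ) + 1))] fun y => ⟪u, ν y⟫ := by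
        filter_upwards [ae_restrict_mem measurableSet_ball] with y hy
        rw [hτone y (Metric.ball_subset_closedBall hy), one_mul]
      exact (hτint.restrict).congr hae
    -- far field: the normal integrand vanishes a.e. outside the closure of E
    have hU : IsOpen (closure E)ᶜ := isClosed_closure.isOpen_compl
    have hfar : ∀ᵐ y ∂((μH[n - 1]).restrict B), y ∈ (closure E)ᶜ → ⟪u, ν y⟫ = 0 := by
      refine hU.ae_eq_zero_of_integral_contDiff_smul_eq_zero
        (hloc.locallyIntegrableOn _) ?_
      intro g hg hgs hgsupp
      have hk := key g (hg.of_le (by exact_mod_cast le_top)) hgs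
      have hzero : ∫ x in E, fderiv ℝ g x u = 0 := by
        rw [setIntegral_congr_fun hEmeas (g := fun _ => (0 : ℝ)) (fun x hx => ?_)]
        · simp
        · have hx' : x ∉ tsupport g := fun hc => (hgsupp hc) (subset_closure hx)
          have hev : g =ᶠ[nhds x] fun _ => (0 : ℝ) := by
            filter_upwards [(isClosed_tsupport g).isOpen_compl.mem_nhds hx'] with y hy
            exact image_eq_zero_of_notMem_tsupport hy
          rw [hev.fderiv_eq]
          simp
      simp only [smul_eq_mul]
      rw [hk.2, hzero]
    -- integrability of the positive part
    obtain ⟨r₁, hr₁⟩ := hEbdd.closure.subset_closedBall 0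
    obtain ⟨j₀, hj₀⟩ := exists_nat_gt r₁
    obtain ⟨τ, hτint, hτone⟩ := hτ j₀
    have hclos : closure E ⊆ Metric.closedBall (0 : EuclideanSpace ℝ (Fin n)) ((j₀ : ℝ) + 1) :=
      hr₁.trans (Metric.closedBall_subset_closedBall (by linarith))
    have hae2 : (fun y => τ y * ⟪u, ν y⟫) =ᵐ[(μH[n - 1]).restrict B] fun y => ⟪u, ν y⟫ := by
      filter_upwards [hfar] with y hy
      by_cases hyE : y ∈ closure E
      · rw [hτone y (hclos hyE), one_mul]
      · rw [hy hyE, mul_zero]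
    have hinth : Integrable (fun y => ⟪u, ν y⟫) ((μH[n - 1]).restrict B) := hτint.congr hae2
    have hintpos : Integrable (fun y => max ⟪u, ν y⟫ 0) ((μH[n - 1]).restrict B) :=
      hinth.pos_part
    -- conclusion
    have hle : (fun y => ψ₀ y * ⟪u, ν y⟫) ≤ fun y => max ⟪u, ν y⟫ 0 := by
      intro y
      rcases le_or_gt 0 ⟪u, ν y⟫ with hy | hy
      · calc ψ₀ y * ⟪u, ν y⟫ ≤ 1 * ⟪u, ν y⟫ := mul_le_mul_of_nonneg_right (hψ1 y) hy
          _ = ⟪u, ν y⟫ := one_mul _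
          _ ≤ max ⟪u, ν y⟫ 0 := le_max_left _ _
      · have h1 : ψ₀ y * ⟪u, ν y⟫ ≤ 0 := mul_nonpos_of_nonneg_of_nonpos (hψ0 y) hy.le
        exact h1.trans (le_max_right _ _)
    calc V / (D + ε) = V / L := by rw [hLeq]
      _ = ∫ y in B, ψ₀ y * ⟪u, ν y⟫ ∂(μH[n - 1]) := hbase'.symm
      _ ≤ ∫ y in B, max ⟪u, ν y⟫ 0 ∂(μH[n - 1]) := integral_mono hbaseint hintpos hle
  -- pass to the limit ε → 0⁺
  have hlim : Filter.Tendsto (fun ε : ℝ => V / (D + ε)) (nhdsWithin 0 (Set.Ioi 0))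
      (nhds (V / D)) := by
    have h1 : Filter.Tendsto (fun ε : ℝ => V / (D + ε)) (nhds 0) (nhds (V / (D + 0))) := by
      refine Filter.Tendsto.div tendsto_const_nhds ?_ (by linarith)
      exact (continuous_const.add continuous_id).tendsto 0
    rw [add_zero] at h1
    exact h1.mono_left nhdsWithin_le_nhds
  refine le_of_tendsto hlim ?_
  filter_upwards [self_mem_nhdsWithin] with ε hε
  exact main ε hε
end

section
/- Let φ ∈ 𝒩, G ⊂ ℝⁿ bounded open with diameter D_G, f ∈ W₀^{1,Φ}(G) nonnegative, and set c_φ = max{c > 0 : max(φ(c), φ(−c)) ≤ 1}. Then for every v ∈ S^{n−1}: (∫_G f dx)/(c_φ |G| D_G) ≤ ‖v‖_{f,φ} ≤ (sup_{x∈G} |∇f(x)|)/c_φ. -/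
open Set Metric MeasureTheory
open scoped RealInnerProductSpace ENNReal Topology

/-- The Orlicz norm `‖y‖_{f,φ}` associated to a function with (weak) gradient
`df` on a domain `G`: `inf{λ > 0 : (1/|G|) ∫_G φ(y·∇f/λ) ≤ 1}`. -/
noncomputable def orliczNorm {n : ℕ} (φ : ℝ → ℝ)
    (G : Set (EuclideanSpace ℝ (Fin n)))
    (df : EuclideanSpace ℝ (Fin n) → EuclideanSpace ℝ (Fin n))
    (y : EuclideanSpace ℝ (Fin n)) : ℝ :=
  sInf {l : ℝ | 0 < l ∧
    ((volume G).toReal)⁻¹ * ∫ x in G, φ (⟪y, df x⟫ / l) ≤ 1}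

private lemma convex_smul_le' {φ : ℝ → ℝ} (hconv : ConvexOn ℝ Set.univ φ) (hzero : φ 0 = 0)
    {b : ℝ} (hb0 : 0 ≤ b) (hb1 : b ≤ 1) (x : ℝ) : φ (b * x) ≤ b * φ x := by
  have h := hconv.2 (Set.mem_univ (0:ℝ)) (Set.mem_univ x)
    (show (0:ℝ) ≤ 1 - b by linarith) hb0 (by ring)
  simpa [hzero, smul_eq_mul] using h

private lemma convex_le_endpoints' {φ : ℝ → ℝ} (hconv : ConvexOn ℝ Set.univ φ)
    {c t : ℝ} (hc : 0 ≤ c) (ht : |t| ≤ c) : φ t ≤ max (φ c) (φ (-c)) := by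
  rw [max_comm]
  refine hconv.le_on_segment (Set.mem_univ (-c)) (Set.mem_univ c) ?_
  rw [segment_eq_Icc (by linarith : -c ≤ c)]
  exact Set.mem_Icc.mpr (abs_le.mp ht)

private lemma scale_gt' {φ : ℝ → ℝ} (hconv : ConvexOn ℝ Set.univ φ) (hzero : φ 0 = 0)
    {t a : ℝ} (h1 : φ t = 1) (ha : 1 < a) (hle : φ (a * t) ≤ 1) : False := by
  have h0 : 0 < a := by linarith
  have hinv1 : a⁻¹ ≤ 1 := by
    rw [inv_le_one_iff₀]
    right; linarith
  have hb := convex_smul_le' hconv hzero (b := a⁻¹) (by positivity) hinv1 (a * t)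
  rw [show a⁻¹ * (a * t) = t by field_simp, h1] at hb
  have h4 : a * (a⁻¹ * φ (a * t)) = φ (a * t) := by field_simp
  have h5 := mul_le_mul_of_nonneg_left hb h0.le
  rw [mul_one, h4] at h5
  linarith

private lemma max_eq_one' {φ : ℝ → ℝ} (hφcont : Continuous φ) {cφ : ℝ}
    (hcφ : IsGreatest {c : ℝ | 0 < c ∧ max (φ c) (φ (-c)) ≤ 1} cφ) :
    max (φ cφ) (φ (-cφ)) = 1 := by
  refine le_antisymm hcφ.1.2 ?_
  by_contra hcon
  push_neg at hcon
  have hev : {t : ℝ | max (φ t) (φ (-t)) < 1} ∈ 𝓝 cφ :=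
    (isOpen_lt (hφcont.max (hφcont.comp continuous_neg)) continuous_const).mem_nhds hcon
  have hev' : ∀ᶠ t in 𝓝[>] cφ, max (φ t) (φ (-t)) < 1 :=
    Filter.Eventually.filter_mono nhdsWithin_le_nhds hev
  obtain ⟨t, ht1, ht2⟩ := (hev'.and eventually_mem_nhdsWithin).exists
  have hmem : t ∈ {c : ℝ | 0 < c ∧ max (φ c) (φ (-c)) ≤ 1} :=
    ⟨lt_trans hcφ.1.1 ht2, ht1.le⟩
  exact absurd (hcφ.2 hmem) (not_le.mpr ht2)

set_option maxHeartbeats 1600000 in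
/-- bounds for `‖v‖_{f,φ}`: with
`c_φ = max{c > 0 : max(φ(c),φ(−c)) ≤ 1}`, for every unit vector `v`,
`(∫_G f)/(c_φ |G| D_G) ≤ ‖v‖_{f,φ} ≤ sup_{x ∈ G} |∇f(x)| / c_φ`. -/
theorem stmt12 {n : ℕ} (φ : ℝ → ℝ)
    (hconv : ConvexOn ℝ Set.univ φ) (hnonneg : ∀ t, 0 ≤ φ t) (hzero : φ 0 = 0)
    (hmono : StrictAntiOn φ (Set.Iic 0) ∨ StrictMonoOn φ (Set.Ici 0))
    (G : Set (EuclideanSpace ℝ (Fin n))) (hGopen : IsOpen G)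
    (hGbdd : Bornology.IsBounded G) (hGvol : 0 < volume G)
    (f : EuclideanSpace ℝ (Fin n) → ℝ) (hfpos : ∀ x, 0 ≤ f x)
    (df : EuclideanSpace ℝ (Fin n) → EuclideanSpace ℝ (Fin n))
    (hsupp : ∀ x ∉ G, f x = 0 ∧ df x = 0)
    (hweak : ∀ ψ : EuclideanSpace ℝ (Fin n) → ℝ,
      ContDiff ℝ 1 ψ → HasCompactSupport ψ →
      ∀ w : EuclideanSpace ℝ (Fin n),
        ∫ x, f x * fderiv ℝ ψ x w = - ∫ x, ψ x * ⟪df x, w⟫)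
    (hdfbdd : BddAbove ((fun x => ‖df x‖) '' G))
    (cφ : ℝ) (hcφ : IsGreatest {c : ℝ | 0 < c ∧ max (φ c) (φ (-c)) ≤ 1} cφ)
    (v : EuclideanSpace ℝ (Fin n)) (hv : ‖v‖ = 1) :
    (∫ x in G, f x) / (cφ * (volume G).toReal * Metric.diam G)
        ≤ orliczNorm φ G df v ∧
      orliczNorm φ G df v ≤ sSup ((fun x => ‖df x‖) '' G) / cφ := by
  classical
  have hφcont : Continuous φ := continuousOn_univ.mp (hconv.continuousOn isOpen_univ)
  have hGmeas : MeasurableSet G := hGopen.measurableSet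
  have hGfin : volume G < ∞ := hGbdd.measure_lt_top
  have hvolpos : 0 < (volume G).toReal := ENNReal.toReal_pos hGvol.ne' hGfin.ne
  have hGne : G.Nonempty := nonempty_of_measure_ne_zero hGvol.ne'
  have hcpos : 0 < cφ := hcφ.1.1
  have hmax1 : max (φ cφ) (φ (-cφ)) = 1 := max_eq_one' hφcont hcφ
  set M : ℝ := sSup ((fun x => ‖df x‖) '' G) with hMdef
  have hgM : ∀ x ∈ G, |⟪v, df x⟫| ≤ M := by
    intro x hx
    calc |⟪v, df x⟫| ≤ ‖v‖ * ‖df x‖ := abs_real_inner_le_norm v (df x)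
    _ = ‖df x‖ := by rw [hv, one_mul]
    _ ≤ M := le_csSup hdfbdd ⟨x, hx, rfl⟩
  have hM0 : 0 ≤ M := by
    obtain ⟨x, hx⟩ := hGne
    exact le_trans (norm_nonneg (df x)) (le_csSup hdfbdd ⟨x, hx, rfl⟩)
  set S : Set ℝ := {l : ℝ | 0 < l ∧
      ((volume G).toReal)⁻¹ * ∫ x in G, φ (⟪v, df x⟫ / l) ≤ 1} with hSdef
  have hOrl : orliczNorm φ G df v = sInf S := rfl
  -- membership criterion
  have hmemS : ∀ l : ℝ, 0 < l → (∀ x ∈ G, |⟪v, df x⟫| ≤ cφ * l) → l ∈ S := by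
    intro l hl hb
    refine ⟨hl, ?_⟩
    by_cases hInt : IntegrableOn (fun x => φ (⟪v, df x⟫ / l)) G volume
    · have h1 : (∫ x in G, φ (⟪v, df x⟫ / l)) ≤ ∫ _x in G, (1:ℝ) := by
        refine setIntegral_mono_on hInt (integrableOn_const hGfin.ne) hGmeas ?_
        intro x hx
        have habs : |⟪v, df x⟫ / l| ≤ cφ := by
          rw [abs_div, abs_of_pos hl, div_le_iff₀ hl]
          exact hb x hx
        exact (convex_le_endpoints' hconv hcpos.le habs).trans hmax1.le
      rw [setIntegral_const, smul_eq_mul, mul_one] at h1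
      calc ((volume G).toReal)⁻¹ * ∫ x in G, φ (⟪v, df x⟫ / l)
          ≤ ((volume G).toReal)⁻¹ * (volume G).toReal :=
            mul_le_mul_of_nonneg_left h1 (inv_nonneg.mpr hvolpos.le)
        _ = 1 := inv_mul_cancel₀ hvolpos.ne'
    · rw [integral_undef hInt, mul_zero]; exact zero_le_one
  have hSbdd : BddBelow S := ⟨0, fun l hl => hl.1.le⟩
  have hSne : S.Nonempty := by
    have hpos : (0:ℝ) < M / cφ + 1 := by
      have := div_nonneg hM0 hcpos.le; linarith
    refine ⟨M / cφ + 1, hmemS _ hpos fun x hx => ?_⟩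
    have h2 : cφ * (M / cφ + 1) = M + cφ := by field_simp
    rw [h2]
    exact (hgM x hx).trans (by linarith)
  -- upper bound
  have hupper : sInf S ≤ M / cφ := by
    rcases eq_or_lt_of_le hM0 with h0 | hMpos
    · rw [← h0, zero_div]
      by_contra hcon
      push_neg at hcon
      have hmem : sInf S / 2 ∈ S := by
        refine hmemS _ (by linarith) fun x hx => ?_
        have h3 := hgM x hx
        rw [← h0] at h3
        have h4 : |⟪v, df x⟫| = 0 := le_antisymm h3 (abs_nonneg _)
        rw [h4]
        have : 0 ≤ cφ * (sInf S / 2) := by positivity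
        linarith
      have := csInf_le hSbdd hmem
      linarith
    · refine csInf_le hSbdd (hmemS _ (div_pos hMpos hcpos) fun x hx => ?_)
      rw [show cφ * (M / cφ) = M by field_simp]
      exact hgM x hx
  -- positive diameter
  have hD0 : 0 < diam G := by
    obtain ⟨x, hx⟩ := hGne
    obtain ⟨ε, εpos, hball⟩ := Metric.isOpen_iff.mp hGopen x hx
    have hy : x + (ε/2) • v ∈ G := by
      apply hball
      rw [mem_ball, dist_self_add_left, norm_smul, Real.norm_eq_abs, hv, mul_one,
        abs_of_pos (by linarith : (0:ℝ) < ε/2)]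
      linarith
    have h1 := dist_le_diam_of_mem hGbdd hy hx
    rw [dist_self_add_left, norm_smul, Real.norm_eq_abs, hv, mul_one,
      abs_of_pos (by linarith : (0:ℝ) < ε/2)] at h1
    linarith
  -- bump function
  obtain ⟨R, hRsub⟩ := (isBounded_iff_subset_closedBall (0 : EuclideanSpace ℝ (Fin n))).mp hGbdd
  have hR : ∀ x ∈ G, ‖x‖ ≤ R := fun x hx => mem_closedBall_zero_iff.mp (hRsub hx)
  have hR0 : 0 ≤ R := by obtain ⟨x, hx⟩ := hGne; exact (norm_nonneg x).trans (hR x hx)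
  let bump : ContDiffBump (0 : EuclideanSpace ℝ (Fin n)) := ⟨R + 1, R + 2, by linarith, by linarith⟩
  -- the weak-derivative identity with test function ψ_c x = bump x * (⟪v,x⟫ - c)
  have hpsi : ∀ c : ℝ,
      (∫ x in G, f x) = - ∫ x, (bump x * (⟪v, x⟫ - c)) * ⟪df x, v⟫ := by
    intro c
    have hψsm : ContDiff ℝ 1 (fun x => bump x * (⟪v, x⟫ - c)) :=
      bump.contDiff.mul ((contDiff_const.inner ℝ contDiff_id).sub contDiff_const)
    have hψcs : HasCompactSupport (fun x => bump x * (⟪v, x⟫ - c)) :=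
      bump.hasCompactSupport.mul_right
    have hfd : ∀ x ∈ G, fderiv ℝ (fun x => bump x * (⟪v, x⟫ - c)) x v = 1 := by
      intro x hx
      have hball : Metric.ball (0 : EuclideanSpace ℝ (Fin n)) (R + 1) ∈ 𝓝 x :=
        Metric.isOpen_ball.mem_nhds (by
          rw [mem_ball_zero_iff]; exact lt_of_le_of_lt (hR x hx) (by linarith))
      have hev : (fun x => bump x * (⟪v, x⟫ - c)) =ᶠ[𝓝 x] fun y => ⟪v, y⟫ - c := by
        filter_upwards [hball] with y hy
        rw [bump.one_of_mem_closedBall (ball_subset_closedBall hy), one_mul]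
      rw [hev.fderiv_eq, fderiv_sub_const,
        fderiv_inner_apply ℝ (differentiableAt_const v) differentiableAt_fun_id]
      have e1 : fderiv ℝ (fun y : EuclideanSpace ℝ (Fin n) => y) x v = v := by
        rw [fderiv_id']; rfl
      have e2 : fderiv ℝ (fun _ : EuclideanSpace ℝ (Fin n) => v) x v = 0 := by
        rw [fderiv_fun_const]; rfl
      rw [e1, e2, inner_zero_left, add_zero, real_inner_self_eq_norm_mul_norm, hv, one_mul]
    have h1 : (∫ x, f x * fderiv ℝ (fun x => bump x * (⟪v, x⟫ - c)) x v) = ∫ x in G, f x := by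
      rw [← integral_indicator hGmeas]
      congr 1
      funext x
      by_cases hx : x ∈ G
      · rw [Set.indicator_of_mem hx, hfd x hx, mul_one]
      · rw [Set.indicator_of_notMem hx, (hsupp x hx).1, zero_mul]
    rw [← h1, hweak _ hψsm hψcs v]
  have hpsiG : ∀ c : ℝ,
      (∫ x, (bump x * (⟪v, x⟫ - c)) * ⟪df x, v⟫) = ∫ x in G, (⟪v, x⟫ - c) * ⟪v, df x⟫ := by
    intro c
    rw [← integral_indicator hGmeas]
    congr 1
    funext x
    by_cases hx : x ∈ G
    · rw [Set.indicator_of_mem hx,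
        bump.one_of_mem_closedBall (mem_closedBall_zero_iff.mpr ((hR x hx).trans (by show (R:ℝ) ≤ R + 1; linarith))),
        one_mul, real_inner_comm (df x) v]
    · rw [Set.indicator_of_notMem hx, (hsupp x hx).2, inner_zero_left, mul_zero]
  have hid : ∀ c : ℝ, (∫ x in G, f x) = ∫ x in G, (c - ⟪v, x⟫) * ⟪v, df x⟫ := by
    intro c
    rw [hpsi c, hpsiG c, ← integral_neg]
    congr 1
    funext x
    ring
  rw [hOrl]
  constructor
  · -- lower bound
    by_cases hmeas : AEStronglyMeasurable (fun x => ⟪v, df x⟫) (volume.restrict G)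
    · refine le_csInf hSne fun l hl => ?_
      obtain ⟨hlpos, hmod⟩ := hl
      set D := diam G with hDdef
      rw [div_le_iff₀ (mul_pos (mul_pos hcpos hvolpos) hD0)]
      haveI hfm : IsFiniteMeasure (volume.restrict G) :=
        ⟨by rwa [Measure.restrict_apply_univ]⟩
      haveI : NeZero (volume.restrict G) :=
        ⟨fun h => hGvol.ne' (Measure.restrict_eq_zero.mp h)⟩
      have gInt : IntegrableOn (fun x => ⟪v, df x⟫) G volume :=
        ⟨hmeas, HasFiniteIntegral.restrict_of_bounded (C := M) hGfin
          ((ae_restrict_iff' hGmeas).mpr (Filter.Eventually.of_forall fun x hx => by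
            rw [Real.norm_eq_abs]; exact hgM x hx))⟩
      -- Jensen step
      have key : ∀ u : EuclideanSpace ℝ (Fin n) → ℝ,
          AEStronglyMeasurable u (volume.restrict G) →
          (∀ x ∈ G, |u x| ≤ M) →
          (∀ x ∈ G, φ (u x / l) ≤ φ (⟪v, df x⟫ / l)) →
          φ (((volume G).toReal)⁻¹ * ((∫ x in G, u x) / l)) ≤ 1 := by
        intro u hu hub hcomp
        have uInt : IntegrableOn u G volume :=
          ⟨hu, HasFiniteIntegral.restrict_of_bounded (C := M) hGfin
            ((ae_restrict_iff' hGmeas).mpr (Filter.Eventually.of_forall fun x hx => by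
              rw [Real.norm_eq_abs]; exact hub x hx))⟩
        have hCbd : ∀ w : EuclideanSpace ℝ (Fin n) → ℝ, (∀ x ∈ G, |w x| ≤ M) → ∀ x ∈ G,
            ‖φ (w x / l)‖ ≤ max (φ (M / l)) (φ (-(M / l))) := by
          intro w hw x hx
          rw [Real.norm_eq_abs, abs_of_nonneg (hnonneg _)]
          refine convex_le_endpoints' hconv (div_nonneg hM0 hlpos.le) ?_
          rw [abs_div, abs_of_pos hlpos]
          exact (div_le_div_iff_of_pos_right hlpos).mpr (hw x hx)
        have φuInt : IntegrableOn (fun x => φ (u x / l)) G volume :=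
          ⟨hφcont.comp_aestronglyMeasurable (hu.aemeasurable.div aemeasurable_const).aestronglyMeasurable,
            HasFiniteIntegral.restrict_of_bounded _ hGfin
              ((ae_restrict_iff' hGmeas).mpr (Filter.Eventually.of_forall (hCbd u hub)))⟩
        have φgInt : IntegrableOn (fun x => φ (⟪v, df x⟫ / l)) G volume :=
          ⟨hφcont.comp_aestronglyMeasurable (hmeas.aemeasurable.div aemeasurable_const).aestronglyMeasurable,
            HasFiniteIntegral.restrict_of_bounded _ hGfin
              ((ae_restrict_iff' hGmeas).mpr (Filter.Eventually.of_forall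
                (hCbd (fun x => ⟪v, df x⟫) hgM)))⟩
        have hJ := hconv.map_average_le hφcont.continuousOn isClosed_univ
          (Filter.Eventually.of_forall fun x => Set.mem_univ _) (uInt.div_const l) φuInt
        have havg1 : (⨍ x, u x / l ∂(volume.restrict G))
            = ((volume G).toReal)⁻¹ * ((∫ x in G, u x) / l) := by
          rw [average_eq, measureReal_restrict_apply_univ, measureReal_def, smul_eq_mul, integral_div]
        have h2 : (⨍ x, φ (u x / l) ∂(volume.restrict G))
            ≤ ⨍ x, φ (⟪v, df x⟫ / l) ∂(volume.restrict G) := by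
          rw [average_eq, average_eq, measureReal_restrict_apply_univ, measureReal_def, smul_eq_mul, smul_eq_mul]
          exact mul_le_mul_of_nonneg_left (setIntegral_mono_on φuInt φgInt hGmeas hcomp)
            (inv_nonneg.mpr hvolpos.le)
        have h3 : (⨍ x, φ (⟪v, df x⟫ / l) ∂(volume.restrict G)) ≤ 1 := by
          rw [average_eq, measureReal_restrict_apply_univ, measureReal_def, smul_eq_mul]
          exact hmod
        rw [havg1] at hJ
        linarith
      have hone : φ cφ = 1 ∨ φ (-cφ) = 1 := by
        rcases max_cases (φ cφ) (φ (-cφ)) with ⟨h, _⟩ | ⟨h, _⟩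
        · exact Or.inl (by rw [← h, hmax1])
        · exact Or.inr (by rw [← h, hmax1])
      rcases hone with hone | hone
      · -- φ cφ = 1 : use g⁺ and c = sSup
        set c := sSup ((fun x => ⟪v, x⟫) '' G) with hcdef
        have hbddA : BddAbove ((fun x => ⟪v, x⟫) '' G) := by
          refine ⟨R, ?_⟩
          rintro y ⟨x, hx, rfl⟩
          calc ⟪v, x⟫ ≤ ‖v‖ * ‖x‖ := real_inner_le_norm v x
          _ = ‖x‖ := by rw [hv, one_mul]
          _ ≤ R := hR x hx
        have hc1 : ∀ x ∈ G, ⟪v, x⟫ ≤ c := fun x hx => le_csSup hbddA ⟨x, hx, rfl⟩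
        have hc2 : ∀ x ∈ G, c ≤ ⟪v, x⟫ + D := by
          intro x hx
          refine csSup_le (hGne.image _) ?_
          rintro y ⟨z, hz, rfl⟩
          have h4 : ⟪v, z⟫ - ⟪v, x⟫ = ⟪v, z - x⟫ := (inner_sub_right v z x).symm
          have h5 : ⟪v, z - x⟫ ≤ ‖z - x‖ := by
            calc ⟪v, z - x⟫ ≤ ‖v‖ * ‖z - x‖ := real_inner_le_norm _ _
            _ = ‖z - x‖ := by rw [hv, one_mul]
          have h6 : ‖z - x‖ = dist z x := (dist_eq_norm z x).symm
          have h7 := dist_le_diam_of_mem hGbdd hz hx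
          rw [hDdef]; linarith
        have hu : AEStronglyMeasurable (fun x => max ⟪v, df x⟫ 0) (volume.restrict G) :=
          (hmeas.aemeasurable.max aemeasurable_const).aestronglyMeasurable
        have hub : ∀ x ∈ G, |max ⟪v, df x⟫ 0| ≤ M := by
          intro x hx
          rw [abs_of_nonneg (le_max_right _ _)]
          exact max_le ((le_abs_self _).trans (hgM x hx)) hM0
        have hcomp : ∀ x ∈ G, φ (max ⟪v, df x⟫ 0 / l) ≤ φ (⟪v, df x⟫ / l) := by
          intro x hx
          rcases le_or_gt 0 ⟪v, df x⟫ with h | h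
          · rw [max_eq_left h]
          · rw [max_eq_right h.le, zero_div, hzero]
            exact hnonneg _
        have hkey := key _ hu hub hcomp
        set I := ∫ x in G, max ⟪v, df x⟫ 0 with hIdef
        have hI0 : 0 ≤ I := setIntegral_nonneg hGmeas fun x _ => le_max_right _ _
        have hIint : IntegrableOn (fun x => max ⟪v, df x⟫ 0) G volume :=
          ⟨hu, HasFiniteIntegral.restrict_of_bounded (C := M) hGfin
            ((ae_restrict_iff' hGmeas).mpr (Filter.Eventually.of_forall fun x hx => by
              rw [Real.norm_eq_abs]; exact hub x hx))⟩
        have havgle : ((volume G).toReal)⁻¹ * (I / l) ≤ cφ := by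
          by_contra hcon
          push_neg at hcon
          refine scale_gt' hconv hzero hone
            (a := (((volume G).toReal)⁻¹ * (I / l)) / cφ) ((one_lt_div hcpos).mpr hcon) ?_
          rw [div_mul_cancel₀ _ hcpos.ne']
          exact hkey
        have hIle : I ≤ cφ * l * (volume G).toReal := by
          have h8 : I = (((volume G).toReal)⁻¹ * (I / l)) * l * (volume G).toReal := by
            field_simp
          rw [h8]
          exact mul_le_mul_of_nonneg_right
            (mul_le_mul_of_nonneg_right havgle hlpos.le) hvolpos.le
        have hintle : (∫ x in G, f x) ≤ D * I := by
          rw [hid c]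
          have int1 : IntegrableOn (fun x => (c - ⟪v, x⟫) * ⟪v, df x⟫) G volume := by
            refine ⟨(Continuous.aestronglyMeasurable
              (continuous_const.sub (continuous_const.inner continuous_id))).restrict.mul hmeas,
              HasFiniteIntegral.restrict_of_bounded (C := D * M) hGfin
                ((ae_restrict_iff' hGmeas).mpr (Filter.Eventually.of_forall fun x hx => ?_))⟩
            rw [Real.norm_eq_abs, abs_mul]
            refine mul_le_mul ?_ (hgM x hx) (abs_nonneg _) (hDdef ▸ diam_nonneg)
            rw [abs_le]
            constructor
            · have := hc1 x hx
              have hD' : (0:ℝ) ≤ D := hDdef ▸ diam_nonneg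
              linarith
            · have := hc2 x hx
              linarith
          have int2 : IntegrableOn (fun x => D * max ⟪v, df x⟫ 0) G volume := hIint.const_mul D
          calc (∫ x in G, (c - ⟪v, x⟫) * ⟪v, df x⟫)
              ≤ ∫ x in G, D * max ⟪v, df x⟫ 0 := by
                refine setIntegral_mono_on int1 int2 hGmeas fun x hx => ?_
                rcases le_or_gt 0 ⟪v, df x⟫ with h | h
                · rw [max_eq_left h]
                  exact mul_le_mul_of_nonneg_right (by linarith [hc2 x hx]) h
                · rw [max_eq_right h.le, mul_zero]
                  exact mul_nonpos_of_nonneg_of_nonpos (by linarith [hc1 x hx]) h.le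
            _ = D * I := by rw [hIdef]; exact integral_const_mul D _
        calc (∫ x in G, f x) ≤ D * I := hintle
          _ ≤ D * (cφ * l * (volume G).toReal) :=
              mul_le_mul_of_nonneg_left hIle (hDdef ▸ diam_nonneg)
          _ = l * (cφ * (volume G).toReal * D) := by ring
      · -- φ (-cφ) = 1 : use g⁻ and c = sInf
        set c := sInf ((fun x => ⟪v, x⟫) '' G) with hcdef
        have hbddB : BddBelow ((fun x => ⟪v, x⟫) '' G) := by
          refine ⟨-R, ?_⟩
          rintro y ⟨x, hx, rfl⟩
          have h4 : |⟪v, x⟫| ≤ R := by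
            calc |⟪v, x⟫| ≤ ‖v‖ * ‖x‖ := abs_real_inner_le_norm v x
            _ = ‖x‖ := by rw [hv, one_mul]
            _ ≤ R := hR x hx
          linarith [abs_le.mp h4]
        have hc1 : ∀ x ∈ G, c ≤ ⟪v, x⟫ := fun x hx => csInf_le hbddB ⟨x, hx, rfl⟩
        have hc2 : ∀ x ∈ G, ⟪v, x⟫ ≤ c + D := by
          intro x hx
          have h9 : ⟪v, x⟫ - D ≤ c := by
            refine le_csInf (hGne.image _) ?_
            rintro y ⟨z, hz, rfl⟩
            have h4 : ⟪v, x⟫ - ⟪v, z⟫ = ⟪v, x - z⟫ := (inner_sub_right v x z).symm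
            have h5 : ⟪v, x - z⟫ ≤ ‖x - z‖ := by
              calc ⟪v, x - z⟫ ≤ ‖v‖ * ‖x - z‖ := real_inner_le_norm _ _
              _ = ‖x - z‖ := by rw [hv, one_mul]
            have h6 : ‖x - z‖ = dist x z := (dist_eq_norm x z).symm
            have h7 := dist_le_diam_of_mem hGbdd hx hz
            rw [hDdef]; linarith
          linarith
        have hu : AEStronglyMeasurable (fun x => -max (-⟪v, df x⟫) 0) (volume.restrict G) :=
          (hmeas.aemeasurable.neg.max aemeasurable_const).neg.aestronglyMeasurable
        have hub : ∀ x ∈ G, |(-max (-⟪v, df x⟫) 0)| ≤ M := by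
          intro x hx
          rw [abs_neg, abs_of_nonneg (le_max_right _ _)]
          refine max_le ?_ hM0
          calc -⟪v, df x⟫ ≤ |⟪v, df x⟫| := neg_le_abs _
          _ ≤ M := hgM x hx
        have hcomp : ∀ x ∈ G, φ (-max (-⟪v, df x⟫) 0 / l) ≤ φ (⟪v, df x⟫ / l) := by
          intro x hx
          rcases le_or_gt ⟪v, df x⟫ 0 with h | h
          · rw [max_eq_left (neg_nonneg.mpr h), neg_neg]
          · rw [max_eq_right (neg_nonpos.mpr h.le), neg_zero, zero_div, hzero]
            exact hnonneg _
        have hkey := key _ hu hub hcomp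
        have hintneg : (∫ x in G, -max (-⟪v, df x⟫) 0) = -∫ x in G, max (-⟪v, df x⟫) 0 :=
          integral_neg _
        rw [hintneg] at hkey
        set J := ∫ x in G, max (-⟪v, df x⟫) 0 with hJdef
        have hJ0 : 0 ≤ J := setIntegral_nonneg hGmeas fun x _ => le_max_right _ _
        have hJint : IntegrableOn (fun x => max (-⟪v, df x⟫) 0) G volume :=
          ⟨(hmeas.aemeasurable.neg.max aemeasurable_const).aestronglyMeasurable,
            HasFiniteIntegral.restrict_of_bounded (C := M) hGfin
            ((ae_restrict_iff' hGmeas).mpr (Filter.Eventually.of_forall fun x hx => by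
              rw [Real.norm_eq_abs, abs_of_nonneg (le_max_right _ _)]
              refine max_le ((neg_le_abs _).trans (hgM x hx)) hM0))⟩
        rw [show ((volume G).toReal)⁻¹ * (-J / l)
            = -(((volume G).toReal)⁻¹ * (J / l)) by ring] at hkey
        have havgle : ((volume G).toReal)⁻¹ * (J / l) ≤ cφ := by
          by_contra hcon
          push_neg at hcon
          refine scale_gt' hconv hzero hone
            (a := (((volume G).toReal)⁻¹ * (J / l)) / cφ) ((one_lt_div hcpos).mpr hcon) ?_
          rw [show (((volume G).toReal)⁻¹ * (J / l)) / cφ * -cφ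
            = -(((volume G).toReal)⁻¹ * (J / l)) by field_simp]
          exact hkey
        have hJle : J ≤ cφ * l * (volume G).toReal := by
          have h8 : J = (((volume G).toReal)⁻¹ * (J / l)) * l * (volume G).toReal := by
            field_simp
          rw [h8]
          exact mul_le_mul_of_nonneg_right
            (mul_le_mul_of_nonneg_right havgle hlpos.le) hvolpos.le
        have hintle : (∫ x in G, f x) ≤ D * J := by
          rw [hid c]
          have int1 : IntegrableOn (fun x => (c - ⟪v, x⟫) * ⟪v, df x⟫) G volume := by
            refine ⟨(Continuous.aestronglyMeasurable
              (continuous_const.sub (continuous_const.inner continuous_id))).restrict.mul hmeas,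
              HasFiniteIntegral.restrict_of_bounded (C := D * M) hGfin
                ((ae_restrict_iff' hGmeas).mpr (Filter.Eventually.of_forall fun x hx => ?_))⟩
            rw [Real.norm_eq_abs, abs_mul]
            refine mul_le_mul ?_ (hgM x hx) (abs_nonneg _) (hDdef ▸ diam_nonneg)
            rw [abs_le]
            constructor
            · have := hc2 x hx
              linarith
            · have := hc1 x hx
              have hD' : (0:ℝ) ≤ D := hDdef ▸ diam_nonneg
              linarith
          have int2 : IntegrableOn (fun x => D * max (-⟪v, df x⟫) 0) G volume := hJint.const_mul D
          calc (∫ x in G, (c - ⟪v, x⟫) * ⟪v, df x⟫)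
              ≤ ∫ x in G, D * max (-⟪v, df x⟫) 0 := by
                refine setIntegral_mono_on int1 int2 hGmeas fun x hx => ?_
                rcases le_or_gt ⟪v, df x⟫ 0 with h | h
                · rw [max_eq_left (neg_nonneg.mpr h)]
                  have h10 : (c - ⟪v, x⟫) * ⟪v, df x⟫ ≤ (-D) * ⟪v, df x⟫ :=
                    mul_le_mul_of_nonpos_right (by linarith [hc2 x hx]) h
                  have h11 : (-D) * ⟪v, df x⟫ = D * -⟪v, df x⟫ := by ring
                  linarith
                · rw [max_eq_right (neg_nonpos.mpr h.le), mul_zero]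
                  exact mul_nonpos_of_nonpos_of_nonneg (by linarith [hc1 x hx]) h.le
            _ = D * J := by rw [hJdef]; exact integral_const_mul D _
        calc (∫ x in G, f x) ≤ D * J := hintle
          _ ≤ D * (cφ * l * (volume G).toReal) :=
              mul_le_mul_of_nonneg_left hJle (hDdef ▸ diam_nonneg)
          _ = l * (cφ * (volume G).toReal * D) := by ring
    · -- non-measurable case: the integral of f over G must vanish
      have hf0 : (∫ x in G, f x) = 0 := by
        by_cases hI : Integrable (fun x => (bump x * (⟪v, x⟫ - 0)) * ⟪df x, v⟫) volume
        · exfalso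
          apply hmeas
          have hball : ∀ x ∈ G, x ∈ Metric.ball (0 : EuclideanSpace ℝ (Fin n)) (R + 2) :=
            fun x hx => mem_ball_zero_iff.mpr ((hR x hx).trans_lt (by show (R:ℝ) < R + 2; linarith))
          have hker : volume {x : EuclideanSpace ℝ (Fin n) | ⟪v, x⟫ = 0} = 0 := by
            have hset : {x : EuclideanSpace ℝ (Fin n) | ⟪v, x⟫ = 0}
                = ((LinearMap.ker (innerSL ℝ v).toLinearMap : Submodule ℝ (EuclideanSpace ℝ (Fin n))) : Set (EuclideanSpace ℝ (Fin n))) := by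
              ext x
              simp [LinearMap.mem_ker, innerSL_apply_apply]
            rw [hset]
            refine Measure.addHaar_submodule volume _ fun htop => ?_
            have hvmem : v ∈ LinearMap.ker (innerSL ℝ v).toLinearMap := by
              rw [htop]; exact Submodule.mem_top
            rw [LinearMap.mem_ker] at hvmem
            have h9 : ⟪v, v⟫ = (1:ℝ) := by
              rw [real_inner_self_eq_norm_mul_norm, hv, one_mul]
            change innerSL ℝ v v = 0 at hvmem
            rw [innerSL_apply_apply, h9] at hvmem
            exact one_ne_zero hvmem
          have hae0 : ∀ᵐ x ∂(volume.restrict G), ⟪v, x⟫ ≠ 0 := by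
            refine ae_restrict_of_ae ?_
            rw [ae_iff]
            simpa using hker
          have haeb : ∀ᵐ x ∂(volume.restrict G), x ∈ G :=
            (ae_restrict_iff' hGmeas).mpr (Filter.Eventually.of_forall fun x hx => hx)
          have hq : AEStronglyMeasurable
              (fun x => ((bump x * (⟪v, x⟫ - 0)) * ⟪df x, v⟫) / (bump x * (⟪v, x⟫ - 0)))
              (volume.restrict G) :=
            ((hI.aestronglyMeasurable.restrict.aemeasurable.div
              ((bump.continuous.mul ((continuous_const.inner
                continuous_id).sub continuous_const)).aemeasurable.restrict)).aestronglyMeasurable)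
          refine hq.congr ?_
          filter_upwards [hae0, haeb] with x h1 h2
          have hb : bump x ≠ 0 := (bump.pos_of_mem_ball (hball x h2)).ne'
          have hψne : bump x * (⟪v, x⟫ - 0) ≠ 0 := mul_ne_zero hb (by simpa using h1)
          rw [mul_comm (bump x * (⟪v, x⟫ - 0)) ⟪df x, v⟫, mul_div_assoc, div_self hψne,
            mul_one, real_inner_comm]
        · rw [hpsi 0, integral_undef hI, neg_zero]
      rw [hf0, zero_div]
      exact Real.sInf_nonneg fun l hl => hl.1.le
  · exact hupper
end
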